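/- arXiv:2406.12610 — 2 statements merged into one kernel-verified Lean document; each statement's English description precedes it below -/
import Mathlib

section
/- Let α be an inversion sequence. Then α is a 0-ascent sequence (an ascent sequence) if and only if hat_max(α) is ir-subdiagonal. Consequently, for every n, hat_max restricts to a bijection from the set A_{0,n} of ascent sequences of length n to the set of ir-subdiagonal permutations of {1,…,n}. -/
/-- Entry of the word `w` at (1-based) position `i`. -/
def ent (w : List ℕ) (i : ℕ) : ℕ := w.getD (i - 1) 0

/-- `w` is an endofunction of `{1,…,n}`, where `n = w.length`. -/
def IsEndo (w : List ℕ) : Prop := ∀ x ∈ w, 1 ≤ x ∧ x ≤ w.length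

/-- `w` is an inversion sequence. -/
def IsInvSeq (w : List ℕ) : Prop :=
  ∀ i ∈ Finset.Icc 1 w.length, 1 ≤ ent w i ∧ ent w i ≤ i

/-- The set of `d`-ascents of `w` (1-based positions): position `1` is always a
`d`-ascent, and `i ≥ 2` is a `d`-ascent if `a_i > a_{i-1} - d`. -/
def ascSet (d : ℕ) (w : List ℕ) : Finset ℕ :=
  (Finset.Icc 1 w.length).filter fun i => i = 1 ∨ ent w (i - 1) < ent w i + d

/-- The number of `d`-ascents of `w`. -/
def ascCard (d : ℕ) (w : List ℕ) : ℕ := (ascSet d w).card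

/-- `w` is a `d`-ascent sequence. -/
def IsDAscSeq (d : ℕ) (w : List ℕ) : Prop :=
  IsEndo w ∧ ∀ i ∈ Finset.Icc 1 w.length, ent w i ≤ 1 + ascCard d (w.take (i - 1))

/-- One step of the map `M`: add one to every entry strictly to the left of
position `j` that is weakly larger than the entry in position `j`. -/
def Mstep (w : List ℕ) (j : ℕ) : List ℕ :=
  w.mapIdx fun k x => if k + 1 < j ∧ ent w j ≤ x then x + 1 else x

/-- The `d`-hat map: apply `Mstep` successively at the `d`-ascents of `w`,
listed in increasing order. -/
def hatd (d : ℕ) (w : List ℕ) : List ℕ :=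
  ((ascSet d w).sort (· ≤ ·)).foldl Mstep w

/-- Largest entry of `w`. -/
def maxEnt (w : List ℕ) : ℕ := w.foldr max 0

/-- `w` is a Cayley permutation: its image is `{1,…,max w}`. -/
def IsCayley (w : List ℕ) : Prop := ∀ x, x ∈ w ↔ (1 ≤ x ∧ x ≤ maxEnt w)

open Classical in
/-- The set of positions of leftmost copies of the values of `w`. -/
noncomputable def nubSet (w : List ℕ) : Finset ℕ :=
  (Finset.Icc 1 w.length).filter fun i =>
    ∀ j ∈ Finset.Icc 1 w.length, ent w j = ent w i → i ≤ j

/-- The least `d` such that `w` is a `d`-ascent sequence. -/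
noncomputable def mind (w : List ℕ) : ℕ := sInf {d | IsDAscSeq d w}

/-- The set `H(w)` of all the (meaningful) `d`-hats of `w`. -/
def Hset (w : List ℕ) : Set (List ℕ) := {x | ∃ d, mind w ≤ d ∧ x = hatd d w}

/-- The max-hat map. -/
def hatmax (w : List ℕ) : List ℕ := hatd (w.length - 1) w

/-- Weak descent set of `w`. -/
def wDesSet (w : List ℕ) : Finset ℕ :=
  (Finset.Icc 2 w.length).filter fun i => ent w i ≤ ent w (i - 1)

/-- The number of weak descents of `w`. -/
def wdes (w : List ℕ) : ℕ := (wDesSet w).card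

/-- `i` is a right-left minimum index of `w`. -/
def IsRLMinIdx (w : List ℕ) (i : ℕ) : Prop :=
  1 ≤ i ∧ i ≤ w.length ∧ ∀ j, i < j → j ≤ w.length → ent w i < ent w j

/-- The set of right-left minima pairs of `w`. -/
def rlMinP (w : List ℕ) : Set (ℕ × ℕ) :=
  {p | IsRLMinIdx w p.1 ∧ p.2 = ent w p.1}

/-- `w` is the word of a permutation of `{1,…,n}`, where `n = w.length`. -/
def IsPermWord (w : List ℕ) : Prop :=
  w.Nodup ∧ ∀ x ∈ w, 1 ≤ x ∧ x ≤ w.length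

/-- Add one to every entry of `w` that is `≥ a`. -/
def plus (w : List ℕ) (a : ℕ) : List ℕ :=
  w.map fun x => if a ≤ x then x + 1 else x

/-- Add one to every entry of `w` that is `≥ a`, then append `a` at the end. -/
def plusApp (w : List ℕ) (a : ℕ) : List ℕ := plus w a ++ [a]

/-- The index of the maximal increasing run of `w` containing position `i`:
one plus the number of descents up to position `i`. -/
def irIdx (w : List ℕ) (i : ℕ) : ℕ :=
  1 + ((Finset.Icc 2 i).filter fun j => ent w j < ent w (j - 1)).card

/-- `w` is ir-subdiagonal: every entry `c` in the `i`th maximal increasing run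
satisfies `c ≤ n + 1 - i`. -/
def IsIrSub (w : List ℕ) : Prop :=
  ∀ i ∈ Finset.Icc 1 w.length, ent w i + irIdx w i ≤ w.length + 1

/-- The index of the maximal decreasing run of `w` containing position `i`. -/
def drIdx (w : List ℕ) (i : ℕ) : ℕ :=
  1 + ((Finset.Icc 2 i).filter fun j => ent w (j - 1) < ent w j).card

/-- `w` is dr-subdiagonal: every entry `c` in the `i`th maximal decreasing run
satisfies `c ≤ n + 1 - i`. -/
def IsDrSub (w : List ℕ) : Prop :=
  ∀ i ∈ Finset.Icc 1 w.length, ent w i + drIdx w i ≤ w.length + 1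

/-- `w` is a weak descent sequence. -/
def IsWDesSeq (w : List ℕ) : Prop :=
  IsInvSeq w ∧ ∀ i ∈ Finset.Icc 1 w.length, ent w i ≤ 1 + wdes (w.take (i - 1))

/-- `w` is a primitive ascent sequence: an ascent sequence with no flat steps. -/
def IsPrimAscSeq (w : List ℕ) : Prop :=
  IsDAscSeq 0 w ∧ ∀ i ∈ Finset.Icc 1 (w.length - 1), ent w i ≠ ent w (i + 1)

/-- Insert position `i` into a list of positions sorted by the Burge order:
ascending entries, ties broken by descending position. -/
def bInsert (w : List ℕ) (i : ℕ) : List ℕ → List ℕ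
  | [] => [i]
  | j :: t =>
      if ent w i < ent w j ∨ (ent w i = ent w j ∧ j ≤ i) then i :: j :: t
      else j :: bInsert w i t

/-- The permutation `burget w` obtained from the Burge transpose of the biword
with top row `1,…,n` and bottom row `w`: sort the positions `1,…,n` in
ascending order of their entries, breaking ties in descending order of
position. -/
def burget (w : List ℕ) : List ℕ :=
  ((List.range w.length).map (· + 1)).foldr (bInsert w) []


-- basics
lemma ent_eq_getElem (w : List ℕ) (i : ℕ) (h1 : 1 ≤ i) (h2 : i ≤ w.length) :
    ent w i = w[i-1]'(by omega) := List.getD_eq_getElem w 0 (by omega)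

lemma ent_mem (w : List ℕ) (i : ℕ) (h1 : 1 ≤ i) (h2 : i ≤ w.length) : ent w i ∈ w := by
  rw [ent_eq_getElem w i h1 h2]; exact List.getElem_mem _

lemma mem_iff_ent (w : List ℕ) (x : ℕ) :
    x ∈ w ↔ ∃ i, 1 ≤ i ∧ i ≤ w.length ∧ ent w i = x := by
  constructor
  · intro hx
    obtain ⟨n, hn, he⟩ := List.mem_iff_getElem.mp hx
    exact ⟨n+1, by omega, by omega, by rw [ent_eq_getElem _ _ (by omega) (by omega)]; simpa using he⟩
  · rintro ⟨i, h1, h2, rfl⟩; exact ent_mem w i h1 h2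

lemma ent_take (w : List ℕ) (m i : ℕ) (h1 : 1 ≤ i) (h2 : i ≤ m) (h3 : i ≤ w.length) :
    ent (w.take m) i = ent w i := by
  have hl : (w.take m).length = min m w.length := List.length_take
  rw [ent_eq_getElem _ i h1 (by omega), ent_eq_getElem w i h1 h3]
  exact List.getElem_take

lemma length_Mstep (w : List ℕ) (j : ℕ) : (Mstep w j).length = w.length :=
  List.length_mapIdx

lemma ent_Mstep (w : List ℕ) (j k : ℕ) (h1 : 1 ≤ k) (h2 : k ≤ w.length) :
    ent (Mstep w j) k = if k < j ∧ ent w j ≤ ent w k then ent w k + 1 else ent w k := by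
  have hk : k - 1 < w.length := by omega
  rw [ent_eq_getElem _ k h1 (by rw [length_Mstep]; exact h2), ent_eq_getElem w k h1 h2]
  simp only [Mstep, List.getElem_mapIdx]
  have : k - 1 + 1 = k := by omega
  rw [this]

def gfold (w : List ℕ) (j : ℕ) : List ℕ := (List.range' 1 j).foldl Mstep w

lemma gfold_zero (w : List ℕ) : gfold w 0 = w := rfl

lemma gfold_succ (w : List ℕ) (j : ℕ) : gfold w (j+1) = Mstep (gfold w j) (j+1) := by
  unfold gfold
  rw [List.range'_concat, List.foldl_append]
  simp [Nat.add_comm]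

lemma length_gfold (w : List ℕ) (j : ℕ) : (gfold w j).length = w.length := by
  induction j with
  | zero => rfl
  | succ j ih => rw [gfold_succ, length_Mstep, ih]

lemma sortIcc (n : ℕ) : (Finset.Icc 1 n).sort (· ≤ ·) = List.range' 1 n := by
  refine List.Perm.eq_of_pairwise' (Finset.pairwise_sort _ _)
    (List.Pairwise.imp le_of_lt (List.pairwise_lt_range' (s := 1) (n := n))) ?_
  apply List.perm_of_nodup_nodup_toFinset_eq (Finset.sort_nodup _ _) (List.nodup_range' (s := 1) (n := n))
  rw [Finset.sort_toFinset]
  ext x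
  simp only [List.mem_toFinset, List.mem_range'_1, Finset.mem_Icc]
  omega

lemma ascSet_max (w : List ℕ) (hw : IsInvSeq w) :
    ascSet (w.length - 1) w = Finset.Icc 1 w.length := by
  apply Finset.filter_true_of_mem
  intro i hi
  rw [Finset.mem_Icc] at hi
  rcases Nat.eq_or_lt_of_le hi.1 with h1 | h1
  · left; omega
  · right
    have ha := hw (i-1) (Finset.mem_Icc.mpr ⟨by omega, by omega⟩)
    have hb := hw i (Finset.mem_Icc.mpr ⟨by omega, by omega⟩)
    omega

lemma hatmax_eq_gfold (w : List ℕ) (hw : IsInvSeq w) : hatmax w = gfold w w.length := by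
  unfold hatmax hatd gfold
  rw [ascSet_max w hw, sortIcc]

lemma length_hatd (d : ℕ) (w : List ℕ) : (hatd d w).length = w.length := by
  unfold hatd
  generalize (ascSet d w).sort (· ≤ ·) = l
  induction l generalizing w with
  | nil => rfl
  | cons a t ih => simp only [List.foldl_cons]; rw [ih (Mstep w a), length_Mstep]

def pRk (x : List ℕ) (k : ℕ) : ℕ :=
  ((Finset.Icc 1 k).filter (fun l => ent x l ≤ ent x k)).card

lemma Icc_succ_insert (a j : ℕ) (h : a ≤ j + 1) :
    Finset.Icc a (j+1) = insert (j+1) (Finset.Icc a j) := by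
  ext x
  simp only [Finset.mem_insert, Finset.mem_Icc]
  omega

lemma gfold_inv (w : List ℕ) (hw : IsInvSeq w) : ∀ j, j ≤ w.length →
    (∀ k, j < k → k ≤ w.length → ent (gfold w j) k = ent w k) ∧
    (∀ k, 1 ≤ k → k ≤ j → 1 ≤ ent (gfold w j) k ∧ ent (gfold w j) k ≤ j) ∧
    (∀ k l, 1 ≤ k → k ≤ j → 1 ≤ l → l ≤ j →
      ent (gfold w j) k = ent (gfold w j) l → k = l) ∧
    (∀ v, 1 ≤ v → v ≤ j → ∃ k, 1 ≤ k ∧ k ≤ j ∧ ent (gfold w j) k = v) ∧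
    (∀ k, 1 ≤ k → k ≤ j → pRk (gfold w j) k = ent w k) := by
  intro j
  induction j with
  | zero =>
    intro _
    refine ⟨fun k _ _ => rfl, fun k h1 h2 => by omega, fun k l h1 h2 => by omega,
      fun v h1 h2 => by omega, fun k h1 h2 => by omega⟩
  | succ j ih =>
    intro hj1
    obtain ⟨I1, I2, I3, I4, I5⟩ := ih (by omega)
    set n := w.length with hn
    set x := gfold w j with hx
    have hlx : x.length = n := length_gfold w j
    have ht0 := hw (j+1) (Finset.mem_Icc.mpr ⟨by omega, by omega⟩)
    set t := ent w (j+1) with htdef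
    have hxt : ent x (j+1) = t := I1 (j+1) (by omega) (by omega)
    have hy : gfold w (j+1) = Mstep x (j+1) := gfold_succ w j
    -- entry formulas
    have E2 : ∀ k, 1 ≤ k → k ≤ j →
        ent (gfold w (j+1)) k = if t ≤ ent x k then ent x k + 1 else ent x k := by
      intro k h1 h2
      rw [hy, ent_Mstep x (j+1) k h1 (by omega), hxt, if_congr (Iff.intro
        (fun h => h.2) (fun h => ⟨by omega, h⟩)) rfl rfl]
    have E3 : ∀ k, j+1 ≤ k → k ≤ n → ent (gfold w (j+1)) k = ent x k := by
      intro k h1 h2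
      rw [hy, ent_Mstep x (j+1) k (by omega) (by omega), if_neg (by omega)]
    have E4 : ent (gfold w (j+1)) (j+1) = t := by rw [E3 (j+1) le_rfl (by omega), hxt]
    refine ⟨?_, ?_, ?_, ?_, ?_⟩
    · intro k hk1 hk2
      rw [E3 k (by omega) hk2]
      exact I1 k (by omega) hk2
    · intro k h1 h2
      rcases Nat.lt_or_ge k (j+1) with h | h
      · have := I2 k h1 (by omega)
        rw [E2 k h1 (by omega)]
        split <;> omega
      · have : k = j + 1 := by omega
        rw [this, E4]; omega
    · intro k l h1 h2 h3 h4 heq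
      rcases Nat.lt_or_ge k (j+1) with hk | hk <;> rcases Nat.lt_or_ge l (j+1) with hl | hl
      · rw [E2 k h1 (by omega), E2 l h3 (by omega)] at heq
        refine I3 k l h1 (by omega) h3 (by omega) ?_
        revert heq; split <;> split <;> intro heq <;> omega
      · have hl' : l = j + 1 := by omega
        rw [hl', E4, E2 k h1 (by omega)] at heq
        revert heq; split <;> intro heq <;> omega
      · have hk' : k = j + 1 := by omega
        rw [hk', E4, E2 l h3 (by omega)] at heq
        revert heq; split <;> intro heq <;> omega
      · omega
    · intro v h1 h2
      rcases lt_trichotomy v t with h | h | h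
      · obtain ⟨k, hk1, hk2, hk3⟩ := I4 v h1 (by omega)
        exact ⟨k, hk1, by omega, by rw [E2 k hk1 hk2, hk3, if_neg (by omega)]⟩
      · exact ⟨j+1, by omega, le_rfl, by rw [E4]; omega⟩
      · obtain ⟨k, hk1, hk2, hk3⟩ := I4 (v-1) (by omega) (by omega)
        exact ⟨k, hk1, by omega, by rw [E2 k hk1 hk2, hk3, if_pos (by omega)]; omega⟩
    · intro k h1 h2
      rcases Nat.lt_or_ge k (j+1) with hk | hk
      · -- k ≤ j : ranks preserved
        have hk' : k ≤ j := by omega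
        rw [← I5 k h1 hk']
        unfold pRk
        congr 1
        apply Finset.filter_congr
        intro l hl
        rw [Finset.mem_Icc] at hl
        rw [E2 k h1 hk', E2 l hl.1 (by omega)]
        constructor <;> (intro hle; revert hle; split <;> split <;> intro <;> omega)
      · -- k = j+1
        have hk' : k = j + 1 := by omega
        subst hk'
        unfold pRk
        rw [E4]
        rw [Icc_succ_insert 1 j (by omega), Finset.filter_insert, if_pos (by rw [E4])]
        rw [Finset.card_insert_of_notMem (by
          intro hmem
          have := Finset.mem_of_mem_filter _ hmem
          rw [Finset.mem_Icc] at this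
          omega)]
        have hcongr : (Finset.Icc 1 j).filter (fun l => ent (gfold w (j+1)) l ≤ t)
            = (Finset.Icc 1 j).filter (fun l => ent x l < t) := by
          apply Finset.filter_congr
          intro l hl
          rw [Finset.mem_Icc] at hl
          rw [E2 l hl.1 hl.2]
          constructor <;> (intro hle; revert hle; split <;> intro <;> omega)
        rw [hcongr]
        have hcard : ((Finset.Icc 1 j).filter (fun l => ent x l < t)).card
            = (Finset.Icc 1 (t-1)).card := by
          apply Finset.card_bij (fun l _ => ent x l)
          · intro a ha
            rw [Finset.mem_filter, Finset.mem_Icc] at ha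
            have := I2 a ha.1.1 ha.1.2
            rw [Finset.mem_Icc]
            omega
          · intro a ha b hb heq
            rw [Finset.mem_filter, Finset.mem_Icc] at ha hb
            exact I3 a b ha.1.1 ha.1.2 hb.1.1 hb.1.2 heq
          · intro v hv
            rw [Finset.mem_Icc] at hv
            obtain ⟨k, hk1, hk2, hk3⟩ := I4 v hv.1 (by omega)
            exact ⟨k, Finset.mem_filter.mpr ⟨Finset.mem_Icc.mpr ⟨hk1, hk2⟩, by omega⟩, hk3⟩
        rw [hcard, Nat.card_Icc]
        omega

lemma pw_bounds {p : List ℕ} (hp : IsPermWord p) {k : ℕ} (h1 : 1 ≤ k) (h2 : k ≤ p.length) :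
    1 ≤ ent p k ∧ ent p k ≤ p.length :=
  hp.2 _ (ent_mem p k h1 h2)

lemma pw_inj {p : List ℕ} (hp : IsPermWord p) {k l : ℕ} (hk1 : 1 ≤ k) (hk2 : k ≤ p.length)
    (hl1 : 1 ≤ l) (hl2 : l ≤ p.length) (heq : ent p k = ent p l) : k = l := by
  have hinj := List.nodup_iff_injective_get.mp hp.1
  have h1 : p.get ⟨k-1, by omega⟩ = p.get ⟨l-1, by omega⟩ := by
    show p[k-1] = p[l-1]
    rw [← ent_eq_getElem p k hk1 hk2, ← ent_eq_getElem p l hl1 hl2]; exact heq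
  have := hinj h1
  have := Fin.mk.injEq (k-1) (by omega : k-1 < p.length) (l-1) (by omega) ▸ this
  omega

lemma pw_nodup_of_inj {p : List ℕ}
    (h : ∀ k l, 1 ≤ k → k ≤ p.length → 1 ≤ l → l ≤ p.length → ent p k = ent p l → k = l) :
    p.Nodup := by
  rw [List.nodup_iff_injective_get]
  intro ⟨a, ha⟩ ⟨b, hb⟩ heq
  simp only [Fin.mk.injEq]
  have : ent p (a+1) = ent p (b+1) := by
    rw [ent_eq_getElem p (a+1) (by omega) (by omega), ent_eq_getElem p (b+1) (by omega) (by omega)]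
    simpa using heq
  have := h (a+1) (b+1) (by omega) (by omega) (by omega) (by omega) this
  omega

lemma pw_surj {p : List ℕ} (hp : IsPermWord p) {v : ℕ} (h1 : 1 ≤ v) (h2 : v ≤ p.length) :
    ∃ k, 1 ≤ k ∧ k ≤ p.length ∧ ent p k = v := by
  set n := p.length
  have himg : (Finset.Icc 1 n).image (ent p) = Finset.Icc 1 n := by
    apply Finset.eq_of_subset_of_card_le
    · intro x hx
      rw [Finset.mem_image] at hx
      obtain ⟨k, hk, rfl⟩ := hx
      rw [Finset.mem_Icc] at hk ⊢
      exact pw_bounds hp hk.1 hk.2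
    · rw [Finset.card_image_of_injOn]
      intro a ha b hb heq
      simp only [Finset.coe_Icc, Set.mem_Icc] at ha hb
      exact pw_inj hp ha.1 ha.2 hb.1 hb.2 heq
  have : v ∈ (Finset.Icc 1 n).image (ent p) := by
    rw [himg, Finset.mem_Icc]; exact ⟨h1, h2⟩
  rw [Finset.mem_image] at this
  obtain ⟨k, hk, hke⟩ := this
  rw [Finset.mem_Icc] at hk
  exact ⟨k, hk.1, hk.2, hke⟩

lemma pw_countLe {p : List ℕ} (hp : IsPermWord p) {v : ℕ} (hv : v ≤ p.length) :
    ((Finset.Icc 1 p.length).filter (fun k => ent p k ≤ v)).card = v := by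
  have := Finset.card_bij (s := (Finset.Icc 1 p.length).filter (fun k => ent p k ≤ v))
      (t := Finset.Icc 1 v) (fun l _ => ent p l)
      (by
        intro a ha
        rw [Finset.mem_filter, Finset.mem_Icc] at ha
        have := pw_bounds hp ha.1.1 ha.1.2
        rw [Finset.mem_Icc]
        exact ⟨this.1, ha.2⟩)
      (by
        intro a ha b hb heq
        rw [Finset.mem_filter, Finset.mem_Icc] at ha hb
        exact pw_inj hp ha.1.1 ha.1.2 hb.1.1 hb.1.2 heq)
      (by
        intro v' hv'
        rw [Finset.mem_Icc] at hv'
        obtain ⟨k, hk1, hk2, hk3⟩ := pw_surj hp hv'.1 (by omega)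
        exact ⟨k, Finset.mem_filter.mpr ⟨Finset.mem_Icc.mpr ⟨hk1, hk2⟩, by omega⟩, hk3⟩)
  rw [this, Nat.card_Icc]
  omega

lemma hatmax_perm (w : List ℕ) (hw : IsInvSeq w) :
    IsPermWord (hatmax w) ∧ (hatmax w).length = w.length ∧
    (∀ k, 1 ≤ k → k ≤ w.length → pRk (hatmax w) k = ent w k) := by
  rw [hatmax_eq_gfold w hw]
  obtain ⟨I1, I2, I3, I4, I5⟩ := gfold_inv w hw w.length le_rfl
  have hlen : (gfold w w.length).length = w.length := length_gfold w w.length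
  refine ⟨⟨pw_nodup_of_inj ?_, ?_⟩, hlen, fun k h1 h2 => I5 k h1 h2⟩
  · intro k l h1 h2 h3 h4 heq
    rw [hlen] at h2 h4
    exact I3 k l h1 h2 h3 h4 heq
  · intro x hx
    rw [mem_iff_ent] at hx
    obtain ⟨i, h1, h2, rfl⟩ := hx
    rw [hlen] at h2 ⊢
    exact I2 i h1 h2

def dCnt (b : List ℕ) (i : ℕ) : ℕ :=
  ((Finset.Icc 2 i).filter fun j => ent b j < ent b (j-1)).card

lemma dCnt_mono (b : List ℕ) {i i' : ℕ} (h : i ≤ i') : dCnt b i ≤ dCnt b i' :=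
  Finset.card_le_card (Finset.filter_subset_filter _ (Finset.Icc_subset_Icc_right h))

lemma dCnt_one (b : List ℕ) : dCnt b 1 = 0 := by
  unfold dCnt
  rw [show Finset.Icc 2 1 = ∅ from rfl]
  simp

lemma dCnt_succ_asc (b : List ℕ) {i : ℕ} (h2 : 2 ≤ i) (h : ent b (i-1) < ent b i) :
    dCnt b i = dCnt b (i-1) := by
  unfold dCnt
  rw [show Finset.Icc 2 i = insert i (Finset.Icc 2 (i-1)) by
    ext x; simp only [Finset.mem_insert, Finset.mem_Icc]; omega]
  rw [Finset.filter_insert, if_neg (by omega)]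

lemma dCnt_succ_desc (b : List ℕ) {i : ℕ} (h2 : 2 ≤ i) (h : ent b i < ent b (i-1)) :
    dCnt b i = dCnt b (i-1) + 1 := by
  unfold dCnt
  rw [show Finset.Icc 2 i = insert i (Finset.Icc 2 (i-1)) by
    ext x; simp only [Finset.mem_insert, Finset.mem_Icc]; omega]
  rw [Finset.filter_insert, if_pos h, Finset.card_insert_of_notMem (by
    intro hmem
    have := Finset.mem_of_mem_filter _ hmem
    rw [Finset.mem_Icc] at this
    omega)]

lemma rk_split {p : List ℕ} {i : ℕ} (h1 : 1 ≤ i) :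
    pRk p i + ((Finset.Icc 1 i).filter (fun k => ent p i < ent p k)).card = i := by
  unfold pRk
  have := Finset.card_filter_add_card_filter_not (s := Finset.Icc 1 i)
    (p := fun k => ent p k ≤ ent p i)
  rw [Nat.card_Icc] at this
  have hc : (Finset.Icc 1 i).filter (fun k => ¬ ent p k ≤ ent p i)
      = (Finset.Icc 1 i).filter (fun k => ent p i < ent p k) := by
    apply Finset.filter_congr; intro k _; exact Nat.not_le
  rw [hc] at this
  omega

lemma gt_all {p : List ℕ} (hp : IsPermWord p) {i : ℕ} (h1 : 1 ≤ i) (h2 : i ≤ p.length) :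
    ((Finset.Icc 1 p.length).filter (fun k => ent p i < ent p k)).card + ent p i = p.length := by
  have hb := pw_bounds hp h1 h2
  have hle := pw_countLe hp (v := ent p i) hb.2
  have := Finset.card_filter_add_card_filter_not (s := Finset.Icc 1 p.length)
    (p := fun k => ent p k ≤ ent p i)
  rw [Nat.card_Icc] at this
  have hc : (Finset.Icc 1 p.length).filter (fun k => ¬ ent p k ≤ ent p i)
      = (Finset.Icc 1 p.length).filter (fun k => ent p i < ent p k) := by
    apply Finset.filter_congr; intro k _; exact Nat.not_le
  rw [hc, hle] at this
  omega

lemma gt_split {p : List ℕ} {i : ℕ} (h1 : 1 ≤ i) (h2 : i ≤ p.length) :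
    ((Finset.Icc 1 p.length).filter (fun k => ent p i < ent p k)).card
      = ((Finset.Icc 1 i).filter (fun k => ent p i < ent p k)).card
        + ((Finset.Icc (i+1) p.length).filter (fun k => ent p i < ent p k)).card := by
  have hu : Finset.Icc 1 p.length = Finset.Icc 1 i ∪ Finset.Icc (i+1) p.length := by
    ext x; simp only [Finset.mem_union, Finset.mem_Icc]; omega
  rw [hu, Finset.filter_union, Finset.card_union_of_disjoint]
  apply Finset.disjoint_filter_filter
  rw [Finset.disjoint_left]
  intro a ha hb
  rw [Finset.mem_Icc] at ha hb
  omega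

lemma AtoB {p : List ℕ} (hp : IsPermWord p)
    (hA : ∀ i, 2 ≤ i → i ≤ p.length → pRk p i + dCnt p (i-1) ≤ i) :
    ∀ i, 1 ≤ i → i ≤ p.length → ent p i + dCnt p i ≤ p.length := by
  intro i
  induction i using Nat.strong_induction_on with
  | _ i IH =>
    intro h1 h2
    rcases Nat.lt_or_ge i 2 with hi | hi
    · have : i = 1 := by omega
      subst this
      rw [dCnt_one]
      have := pw_bounds hp h1 h2
      omega
    · have hne : ent p (i-1) ≠ ent p i := by
        intro heq
        have := pw_inj hp (k := i-1) (l := i) (by omega) (by omega) (by omega) h2 heq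
        omega
      rcases Nat.lt_or_ge (ent p (i-1)) (ent p i) with hasc | hdesc
      · -- ascent
        rw [dCnt_succ_asc p hi hasc]
        have hAi := hA i hi h2
        have hsplit := rk_split (p := p) (i := i) (by omega)
        have hsub : ((Finset.Icc 1 i).filter (fun k => ent p i < ent p k)).card
            ≤ ((Finset.Icc 1 p.length).filter (fun k => ent p i < ent p k)).card :=
          Finset.card_le_card (Finset.filter_subset_filter _ (Finset.Icc_subset_Icc_right h2))
        have hall := gt_all hp (by omega : 1 ≤ i) h2
        omega
      · have hdesc' : ent p i < ent p (i-1) := by omega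
        rw [dCnt_succ_desc p hi hdesc']
        have := IH (i-1) (by omega) (by omega) (by omega)
        omega

lemma BtoA {p : List ℕ} (hp : IsPermWord p)
    (hB : ∀ i, 1 ≤ i → i ≤ p.length → ent p i + dCnt p i ≤ p.length) :
    ∀ i, 2 ≤ i → i ≤ p.length → pRk p i + dCnt p (i-1) ≤ i := by
  intro i h2 hn
  have hn' : p.length = p.length := rfl
  set u := ent p i with hu
  set d := dCnt p i with hd
  have hBi := hB i (by omega) hn
  have hX : ((Finset.Icc (i+1) p.length).filter (fun k => ent p i < ent p k)).card
      ≤ (Finset.Icc (u+1) (p.length - d)).card := by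
    apply Finset.card_le_card_of_injOn (ent p)
    · intro k hk
      rw [Finset.mem_coe, Finset.mem_filter, Finset.mem_Icc] at hk
      have hBk := hB k (by omega) hk.1.2
      have hdk : d ≤ dCnt p k := dCnt_mono p (by omega)
      rw [Finset.mem_coe, Finset.mem_Icc]
      omega
    · intro a ha b hb heq
      simp only [Finset.coe_filter, Set.mem_setOf_eq, Finset.mem_Icc] at ha hb
      exact pw_inj hp (by omega) ha.1.2 (by omega) hb.1.2 heq
  rw [Nat.card_Icc] at hX
  have hsplit := rk_split (p := p) (i := i) (by omega)
  have hgs := gt_split (p := p) (i := i) (by omega) hn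
  have hall := gt_all hp (by omega : 1 ≤ i) hn
  have hmono : dCnt p (i-1) ≤ d := dCnt_mono p (by omega)
  omega

lemma rk_lt_iff {p : List ℕ} (hp : IsPermWord p) {j : ℕ} (h2 : 2 ≤ j) (hn : j ≤ p.length) :
    pRk p (j-1) < pRk p j ↔ ent p (j-1) < ent p j := by
  have hne : ent p (j-1) ≠ ent p j := by
    intro heq
    have := pw_inj hp (k := j-1) (l := j) (by omega) (by omega) (by omega) hn heq
    omega
  constructor
  · intro hlt
    by_contra hcon
    have hdesc : ent p j < ent p (j-1) := by omega
    -- show pRk p j ≤ pRk p (j-1), contradiction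
    have hsplit : pRk p j = ((Finset.Icc 1 (j-1)).filter (fun k => ent p k ≤ ent p j)).card + 1 := by
      unfold pRk
      rw [show Finset.Icc 1 j = insert j (Finset.Icc 1 (j-1)) by
        ext x; simp only [Finset.mem_insert, Finset.mem_Icc]; omega]
      rw [Finset.filter_insert, if_pos le_rfl, Finset.card_insert_of_notMem (by
        intro hmem
        have := Finset.mem_of_mem_filter _ hmem
        rw [Finset.mem_Icc] at this
        omega)]
    have hge : ((Finset.Icc 1 (j-1)).filter (fun k => ent p k ≤ ent p j)).card + 1
        ≤ pRk p (j-1) := by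
      unfold pRk
      have hsub : insert (j-1) ((Finset.Icc 1 (j-1)).filter (fun k => ent p k ≤ ent p j))
          ⊆ (Finset.Icc 1 (j-1)).filter (fun k => ent p k ≤ ent p (j-1)) := by
        intro x hx
        rw [Finset.mem_insert] at hx
        rcases hx with rfl | hx
        · exact Finset.mem_filter.mpr ⟨Finset.mem_Icc.mpr ⟨by omega, le_rfl⟩, le_rfl⟩
        · rw [Finset.mem_filter] at hx ⊢
          exact ⟨hx.1, by omega⟩
      calc ((Finset.Icc 1 (j-1)).filter (fun k => ent p k ≤ ent p j)).card + 1
          = (insert (j-1) ((Finset.Icc 1 (j-1)).filter (fun k => ent p k ≤ ent p j))).card := by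
            rw [Finset.card_insert_of_notMem (by
              intro hmem
              rw [Finset.mem_filter] at hmem
              omega)]
        _ ≤ _ := Finset.card_le_card hsub
    omega
  · intro hasc
    unfold pRk
    apply Finset.card_lt_card
    constructor
    · intro x hx
      rw [Finset.mem_filter, Finset.mem_Icc] at hx ⊢
      exact ⟨⟨hx.1.1, by omega⟩, by omega⟩
    · intro hsub
      have : j ∈ (Finset.Icc 1 (j-1)).filter (fun k => ent p k ≤ ent p (j-1)) :=
        hsub (Finset.mem_filter.mpr ⟨Finset.mem_Icc.mpr ⟨by omega, le_rfl⟩, le_rfl⟩)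
      have := Finset.mem_of_mem_filter _ this
      rw [Finset.mem_Icc] at this
      omega

lemma ascCard_take {w p : List ℕ} (hp : IsPermWord p) (hlen : p.length = w.length)
    (hrk : ∀ k, 1 ≤ k → k ≤ w.length → pRk p k = ent w k)
    {m : ℕ} (h1 : 1 ≤ m) (h2 : m ≤ w.length) :
    ascCard 0 (w.take m) + dCnt p m = m := by
  have hlt : (w.take m).length = m := by
    rw [List.length_take]; omega
  have hset : ascSet 0 (w.take m)
      = (Finset.Icc 1 m).filter (fun j => j = 1 ∨ ent w (j-1) < ent w j) := by
    unfold ascSet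
    rw [hlt]
    apply Finset.filter_congr
    intro j hj
    rw [Finset.mem_Icc] at hj
    rcases Nat.eq_or_lt_of_le hj.1 with hj1 | hj1
    · constructor <;> intro <;> left <;> omega
    · rw [ent_take w m j hj.1 hj.2 (by omega), ent_take w m (j-1) (by omega) (by omega) (by omega)]
      omega
  have hins : (Finset.Icc 1 m).filter (fun j => j = 1 ∨ ent w (j-1) < ent w j)
      = insert 1 ((Finset.Icc 2 m).filter (fun j => ent p (j-1) < ent p j)) := by
    rw [show Finset.Icc 1 m = insert 1 (Finset.Icc 2 m) by
      ext x; simp only [Finset.mem_insert, Finset.mem_Icc]; omega]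
    rw [Finset.filter_insert, if_pos (Or.inl rfl)]
    congr 1
    apply Finset.filter_congr
    intro j hj
    rw [Finset.mem_Icc] at hj
    have hj1 : j ≠ 1 := by omega
    have hwj : ent w j = pRk p j := (hrk j (by omega) (by omega)).symm
    have hwj1 : ent w (j-1) = pRk p (j-1) := (hrk (j-1) (by omega) (by omega)).symm
    rw [hwj, hwj1]
    constructor
    · intro h
      rcases h with h | h
      · omega
      · exact (rk_lt_iff hp hj.1 (by omega)).mp h
    · intro h
      right
      exact (rk_lt_iff hp hj.1 (by omega)).mpr h
  have hnone : 1 ∉ (Finset.Icc 2 m).filter (fun j => ent p (j-1) < ent p j) := by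
    intro hmem
    have := Finset.mem_of_mem_filter _ hmem
    rw [Finset.mem_Icc] at this
    omega
  have hcards : ((Finset.Icc 2 m).filter (fun j => ent p (j-1) < ent p j)).card + dCnt p m
      = m - 1 := by
    unfold dCnt
    have := Finset.card_filter_add_card_filter_not (s := Finset.Icc 2 m)
      (p := fun j => ent p (j-1) < ent p j)
    rw [Nat.card_Icc] at this
    have hc : (Finset.Icc 2 m).filter (fun j => ¬ ent p (j-1) < ent p j)
        = (Finset.Icc 2 m).filter (fun j => ent p j < ent p (j-1)) := by
      apply Finset.filter_congr
      intro j hj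
      rw [Finset.mem_Icc] at hj
      have hne : ent p (j-1) ≠ ent p j := by
        intro heq
        have := pw_inj hp (k := j-1) (l := j) (by omega) (by omega) (by omega) (by omega) heq
        omega
      constructor <;> intro <;> omega
    rw [hc] at this
    omega
  unfold ascCard
  rw [hset, hins, Finset.card_insert_of_notMem hnone]
  omega

lemma irIdx_eq (w : List ℕ) (i : ℕ) : irIdx w i = 1 + dCnt w i := rfl

lemma ascCard_le (d : ℕ) (w : List ℕ) : ascCard d w ≤ w.length := by
  unfold ascCard
  calc (ascSet d w).card ≤ (Finset.Icc 1 w.length).card :=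
        Finset.card_le_card (Finset.filter_subset _ _)
    _ = w.length := by rw [Nat.card_Icc]; omega

lemma dasc_inv {w : List ℕ} (h : IsDAscSeq 0 w) : IsInvSeq w := by
  intro i hi
  rw [Finset.mem_Icc] at hi
  constructor
  · exact (h.1 _ (ent_mem w i hi.1 hi.2)).1
  · have := h.2 i (Finset.mem_Icc.mpr hi)
    have hle := ascCard_le 0 (w.take (i-1))
    rw [List.length_take] at hle
    omega

lemma equiv1 (w : List ℕ) (hw : IsInvSeq w) : IsDAscSeq 0 w ↔ IsIrSub (hatmax w) := by
  obtain ⟨hperm, hlen, hrk⟩ := hatmax_perm w hw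
  set p := hatmax w with hp
  have hlw : p.length = w.length := hlen
  -- condition A
  have hAiff : IsDAscSeq 0 w ↔ ∀ i, 2 ≤ i → i ≤ p.length → pRk p i + dCnt p (i-1) ≤ i := by
    constructor
    · intro hA i h2 hn
      rw [hlw] at hn
      have := hA.2 i (Finset.mem_Icc.mpr ⟨by omega, hn⟩)
      have htake := ascCard_take hperm hlw hrk (m := i-1) (by omega) (by omega)
      have := hrk i (by omega) hn
      omega
    · intro hcond
      constructor
      · intro x hx
        rw [mem_iff_ent] at hx
        obtain ⟨i, h1, h2, rfl⟩ := hx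
        have := hw i (Finset.mem_Icc.mpr ⟨h1, h2⟩)
        omega
      · intro i hi
        rw [Finset.mem_Icc] at hi
        rcases Nat.eq_or_lt_of_le hi.1 with h1 | h1
        · have := hw i (Finset.mem_Icc.mpr hi)
          omega
        · have := hcond i (by omega) (by omega)
          have htake := ascCard_take hperm hlw hrk (m := i-1) (by omega) (by omega)
          have := hrk i (by omega) hi.2
          omega
  -- condition B
  have hBiff : IsIrSub p ↔ ∀ i, 1 ≤ i → i ≤ p.length → ent p i + dCnt p i ≤ p.length := by
    constructor
    · intro hB i h1 h2
      have := hB i (Finset.mem_Icc.mpr ⟨h1, h2⟩)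
      rw [irIdx_eq] at this
      omega
    · intro hcond i hi
      rw [Finset.mem_Icc] at hi
      have := hcond i hi.1 hi.2
      rw [irIdx_eq]
      omega
  rw [hAiff, hBiff]
  constructor
  · intro hA; exact AtoB hperm hA
  · intro hB; exact BtoA hperm hB

lemma filter_Icc_split (P : ℕ → Prop) [DecidablePred P] {i n : ℕ} (h2 : i ≤ n) :
    ((Finset.Icc 1 n).filter P).card
      = ((Finset.Icc 1 i).filter P).card + ((Finset.Icc (i+1) n).filter P).card := by
  have hu : Finset.Icc 1 n = Finset.Icc 1 i ∪ Finset.Icc (i+1) n := by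
    ext x; simp only [Finset.mem_union, Finset.mem_Icc]; omega
  rw [hu, Finset.filter_union, Finset.card_union_of_disjoint]
  apply Finset.disjoint_filter_filter
  rw [Finset.disjoint_left]
  intro a ha hb
  rw [Finset.mem_Icc] at ha hb
  omega

lemma rank_unique_aux {b c : List ℕ} (hb : IsPermWord b) (hc : IsPermWord c)
    (hl : b.length = c.length) {i : ℕ} (h1 : 1 ≤ i) (h2 : i ≤ b.length)
    (hr : pRk b i = pRk c i)
    (hsuf : ∀ k, i < k → k ≤ b.length → ent b k = ent c k) :
    ¬ (ent b i < ent c i) := by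
  intro hlt
  have hub := pw_bounds hb h1 h2
  have hvc := pw_bounds hc (k := i) h1 (by omega)
  rw [← hl] at hvc
  have hU : ((Finset.Icc 1 b.length).filter (fun k => ent b k ≤ ent b i)).card = ent b i :=
    pw_countLe hb hub.2
  have hV' : ((Finset.Icc 1 c.length).filter (fun k => ent c k ≤ ent c i)).card = ent c i :=
    pw_countLe hc (by omega)
  rw [← hl] at hV'
  rw [filter_Icc_split _ h2] at hU hV'
  have hfrontb : ((Finset.Icc 1 i).filter (fun k => ent b k ≤ ent b i)).card = pRk b i := rfl
  have hfrontc : ((Finset.Icc 1 i).filter (fun k => ent c k ≤ ent c i)).card = pRk c i := rfl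
  rw [hfrontb] at hU
  rw [hfrontc] at hV'
  have hYX : ((Finset.Icc (i+1) b.length).filter (fun k => ent c k ≤ ent c i)).card
      = ((Finset.Icc (i+1) b.length).filter (fun k => ent b k ≤ ent c i)).card := by
    apply congrArg
    apply Finset.filter_congr
    intro k hk
    rw [Finset.mem_Icc] at hk
    rw [hsuf k (by omega) hk.2]
  rw [hYX] at hV'
  -- split the big filter
  have hsplit : (Finset.Icc (i+1) b.length).filter (fun k => ent b k ≤ ent c i)
      = ((Finset.Icc (i+1) b.length).filter (fun k => ent b k ≤ ent b i))
        ∪ ((Finset.Icc (i+1) b.length).filter (fun k => ent b i < ent b k ∧ ent b k ≤ ent c i)) := by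
    ext x
    simp only [Finset.mem_union, Finset.mem_filter, Finset.mem_Icc]
    omega
  have hdisj : Disjoint ((Finset.Icc (i+1) b.length).filter (fun k => ent b k ≤ ent b i))
      ((Finset.Icc (i+1) b.length).filter (fun k => ent b i < ent b k ∧ ent b k ≤ ent c i)) := by
    rw [Finset.disjoint_left]
    intro a ha ha'
    rw [Finset.mem_filter] at ha ha'
    omega
  rw [hsplit, Finset.card_union_of_disjoint hdisj] at hV'
  set T := (Finset.Icc (i+1) b.length).filter (fun k => ent b i < ent b k ∧ ent b k ≤ ent c i)
    with hT
  have hcardT : T.card = ent c i - ent b i := by omega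
  -- image of T
  have himg : T.image (ent b) = Finset.Ioc (ent b i) (ent c i) := by
    apply Finset.eq_of_subset_of_card_le
    · intro x hx
      rw [Finset.mem_image] at hx
      obtain ⟨k, hk, rfl⟩ := hx
      rw [hT, Finset.mem_filter] at hk
      rw [Finset.mem_Ioc]
      exact hk.2
    · rw [Finset.card_image_of_injOn, hcardT, Nat.card_Ioc]
      intro x hx y hy heq
      rw [Finset.mem_coe, hT, Finset.mem_filter, Finset.mem_Icc] at hx hy
      exact pw_inj hb (by omega) hx.1.2 (by omega) hy.1.2 heq
  have hvmem : ent c i ∈ T.image (ent b) := by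
    rw [himg, Finset.mem_Ioc]
    omega
  rw [Finset.mem_image] at hvmem
  obtain ⟨k0, hk0, hk0e⟩ := hvmem
  rw [hT, Finset.mem_filter, Finset.mem_Icc] at hk0
  have hck0 : ent c k0 = ent c i := by
    rw [← hsuf k0 (by omega) hk0.1.2]
    exact hk0e
  have := pw_inj hc (k := k0) (l := i) (by omega) (by omega) (by omega) (by omega) hck0
  omega

lemma rank_unique {b c : List ℕ} (hb : IsPermWord b) (hc : IsPermWord c)
    (hl : b.length = c.length)
    (hr : ∀ i, 1 ≤ i → i ≤ b.length → pRk b i = pRk c i) : b = c := by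
  have key : ∀ d i, 1 ≤ i → i + d = b.length → ent b i = ent c i := by
    intro d
    induction d using Nat.strong_induction_on with
    | _ d IH =>
      intro i h1 h2
      have hsuf : ∀ k, i < k → k ≤ b.length → ent b k = ent c k := by
        intro k hk1 hk2
        exact IH (b.length - k) (by omega) k (by omega) (by omega)
      have h2' : i ≤ b.length := by omega
      have hni := rank_unique_aux hb hc hl h1 h2' (hr i h1 h2') hsuf
      have hni' := rank_unique_aux hc hb hl.symm h1 (by omega) (hr i h1 h2').symm
        (fun k hk1 hk2 => (hsuf k hk1 (by omega)).symm)
      omega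
  apply List.ext_getElem hl
  intro j hj1 hj2
  have := key (b.length - (j+1)) (j+1) (by omega) (by omega)
  rw [ent_eq_getElem b (j+1) (by omega) (by omega),
    ent_eq_getElem c (j+1) (by omega) (by omega)] at this
  simpa using this

lemma pRk_bounds (p : List ℕ) {i : ℕ} (h1 : 1 ≤ i) : 1 ≤ pRk p i ∧ pRk p i ≤ i := by
  constructor
  · apply Finset.card_pos.mpr
    exact ⟨i, Finset.mem_filter.mpr ⟨Finset.mem_Icc.mpr ⟨h1, le_rfl⟩, le_rfl⟩⟩
  · calc pRk p i ≤ (Finset.Icc 1 i).card := Finset.card_le_card (Finset.filter_subset _ _)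
      _ = i := by rw [Nat.card_Icc]; omega

/-- an inversion sequence `α` is an ascent sequence if and only
if `hat_max(α)` is ir-subdiagonal; consequently `hat_max` restricts to a
bijection from `A_{0,n}` to the ir-subdiagonal permutations of `{1,…,n}`. -/
theorem stmt15 :
    (∀ w : List ℕ, IsInvSeq w → (IsDAscSeq 0 w ↔ IsIrSub (hatmax w))) ∧
    (∀ n : ℕ, Set.BijOn hatmax {w : List ℕ | IsDAscSeq 0 w ∧ w.length = n}
      {p : List ℕ | IsPermWord p ∧ p.length = n ∧ IsIrSub p}) := by
  constructor
  · intro w hw; exact equiv1 w hw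
  · intro n
    refine ⟨?_, ?_, ?_⟩
    · rintro w ⟨ha, hlen⟩
      have hw := dasc_inv ha
      obtain ⟨hperm, hlp, hrk⟩ := hatmax_perm w hw
      exact ⟨hperm, by rw [hlp, hlen], (equiv1 w hw).mp ha⟩
    · rintro w ⟨ha, hlen⟩ w' ⟨ha', hlen'⟩ heq
      have hw := dasc_inv ha
      have hw' := dasc_inv ha'
      obtain ⟨hperm, hlp, hrk⟩ := hatmax_perm w hw
      obtain ⟨hperm', hlp', hrk'⟩ := hatmax_perm w' hw'
      apply List.ext_getElem (by omega : w.length = w'.length)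
      intro j hj1 hj2
      have e1 := hrk (j+1) (by omega) (by omega)
      have e2 := hrk' (j+1) (by omega) (by omega)
      rw [heq] at e1
      have : ent w (j+1) = ent w' (j+1) := by rw [← e1, ← e2]
      rw [ent_eq_getElem w (j+1) (by omega) (by omega),
        ent_eq_getElem w' (j+1) (by omega) (by omega)] at this
      simpa using this
    · rintro p ⟨hperm, hlen, hirsub⟩
      set w := (List.range' 1 p.length).map (fun i => pRk p i) with hwdef
      have hlw : w.length = p.length := by
        rw [hwdef, List.length_map, List.length_range']
      have hwent : ∀ i, 1 ≤ i → i ≤ p.length → ent w i = pRk p i := by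
        intro i h1 h2
        rw [ent_eq_getElem w i h1 (by omega)]
        have hlt : (i - 1) < (List.range' 1 p.length).length := by
          rw [List.length_range']; omega
        simp only [hwdef, List.getElem_map, List.getElem_range']
        congr 1
        omega
      have hwinv : IsInvSeq w := by
        intro i hi
        rw [Finset.mem_Icc, hlw] at hi
        rw [hwent i hi.1 hi.2]
        exact pRk_bounds p hi.1
      obtain ⟨hpermc, hlc, hrkc⟩ := hatmax_perm w hwinv
      have hc : hatmax w = p := by
        apply rank_unique hpermc hperm (by omega)
        intro i h1 h2
        rw [hrkc i h1 (by omega), hwent i h1 (by omega)]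
      refine ⟨w, ⟨?_, by omega⟩, hc⟩
      exact (equiv1 w hwinv).mpr (by rw [hc]; exact hirsub)
end

section
/- Let π = p_1⋯p_n be a permutation of {1,…,n} and let a ∈ {1,…,n+1}; let π⁺a denote the permutation of {1,…,n+1} obtained by increasing by one every entry of π that is ≥ a and then appending a at the end. Then π⁺a is dr-subdiagonal if and only if π is dr-subdiagonal and a ≤ 1 + wdes(π). Furthermore, an inversion sequence α is a weak descent sequence if and only if hat_max(α) is dr-subdiagonal, and hat_max restricts to a bijection from weak descent sequences of length n to dr-subdiagonal permutations of {1,…,n}, for every n. -/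
section Aux

/-- the entry-shift function used by `plus`. -/
private def pf (a x : ℕ) : ℕ := if a ≤ x then x + 1 else x

private lemma pf_lt_iff {a x y : ℕ} : pf a x < pf a y ↔ x < y := by
  unfold pf; split <;> split <;> omega

private lemma pf_le_iff {a x y : ℕ} : pf a x ≤ pf a y ↔ x ≤ y := by
  unfold pf; split <;> split <;> omega

private lemma pf_self_le_iff {a x : ℕ} : a ≤ pf a x ↔ a ≤ x := by
  unfold pf; split <;> omega

private lemma pf_injective (a : ℕ) : Function.Injective (pf a) := by
  intro x y h; unfold pf at h; revert h; split <;> split <;> omega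

private lemma plus_eq_map (w : List ℕ) (a : ℕ) : plus w a = w.map (pf a) := rfl

lemma ent_pos_lt {w : List ℕ} {i : ℕ} (h1 : 1 ≤ i) (h2 : i ≤ w.length) :
    i - 1 < w.length := by omega

lemma ent_append {w v : List ℕ} {i : ℕ} (h1 : 1 ≤ i) (h2 : i ≤ w.length) :
    ent (w ++ v) i = ent w i := by
  unfold ent; exact List.getD_append _ _ _ _ (ent_pos_lt h1 h2)

lemma ent_append_last (w : List ℕ) (a : ℕ) : ent (w ++ [a]) (w.length + 1) = a := by
  unfold ent
  rw [List.getD_append_right _ _ _ _ (by omega)]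
  simp

lemma ent_map {f : ℕ → ℕ} {w : List ℕ} {i : ℕ} (h1 : 1 ≤ i) (h2 : i ≤ w.length) :
    ent (w.map f) i = f (ent w i) := by
  unfold ent
  rw [List.getD_eq_getElem _ _ (by simpa using ent_pos_lt h1 h2),
      List.getD_eq_getElem _ _ (ent_pos_lt h1 h2)]
  simp

lemma ent_plus {w : List ℕ} {a i : ℕ} (h1 : 1 ≤ i) (h2 : i ≤ w.length) :
    ent (plus w a) i = pf a (ent w i) := by
  rw [plus_eq_map, ent_map h1 h2]

lemma length_plus (w : List ℕ) (a : ℕ) : (plus w a).length = w.length := by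
  simp [plus]

lemma length_plusApp (w : List ℕ) (a : ℕ) : (plusApp w a).length = w.length + 1 := by
  simp [plusApp, length_plus]

lemma ent_plusApp {w : List ℕ} {a i : ℕ} (h1 : 1 ≤ i) (h2 : i ≤ w.length) :
    ent (plusApp w a) i = pf a (ent w i) := by
  unfold plusApp
  rw [ent_append h1 (by rw [length_plus]; exact h2), ent_plus h1 h2]

lemma ent_plusApp_last (w : List ℕ) (a : ℕ) : ent (plusApp w a) (w.length + 1) = a := by
  unfold plusApp
  rw [← length_plus w a, ent_append_last]

end Aux
section Aux2

lemma drIdx_mono (w : List ℕ) {i i' : ℕ} (h : i ≤ i') : drIdx w i ≤ drIdx w i' := by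
  unfold drIdx
  have : (Finset.Icc 2 i).filter (fun j => ent w (j-1) < ent w j) ⊆
      (Finset.Icc 2 i').filter (fun j => ent w (j-1) < ent w j) :=
    Finset.filter_subset_filter _ (Finset.Icc_subset_Icc_right h)
  exact Nat.add_le_add_left (Finset.card_le_card this) 1

lemma drIdx_add_wdes (w : List ℕ) (h : 1 ≤ w.length) :
    drIdx w w.length + wdes w = w.length := by
  unfold drIdx wdes wDesSet
  have hc := Finset.card_filter_add_card_filter_not
    (s := Finset.Icc 2 w.length) (p := fun j => ent w (j-1) < ent w j)
  have he : (Finset.Icc 2 w.length).filter (fun j => ¬ ent w (j-1) < ent w j)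
      = (Finset.Icc 2 w.length).filter (fun j => ent w j ≤ ent w (j-1)) := by
    apply Finset.filter_congr; intro j _; simp [Nat.not_lt]
  rw [he] at hc
  have hcard : (Finset.Icc 2 w.length).card = w.length - 1 := by
    rw [Nat.card_Icc]; omega
  omega

lemma drIdx_plusApp {w : List ℕ} {a i : ℕ} (h : i ≤ w.length) :
    drIdx (plusApp w a) i = drIdx w i := by
  unfold drIdx
  congr 1
  apply congrArg Finset.card
  apply Finset.filter_congr
  intro j hj
  rw [Finset.mem_Icc] at hj
  rw [ent_plusApp (by omega) (by omega), ent_plusApp (by omega) (by omega)]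
  simp [pf_lt_iff]

lemma drIdx_plusApp_last {w : List ℕ} {a : ℕ} (h : 1 ≤ w.length) :
    drIdx (plusApp w a) (w.length + 1) =
      drIdx w w.length + (if ent w w.length < a then 1 else 0) := by
  unfold drIdx
  have hins : Finset.Icc 2 (w.length + 1) = insert (w.length + 1) (Finset.Icc 2 w.length) := by
    ext x; simp [Finset.mem_Icc]; omega
  have hfe : (Finset.Icc 2 (w.length+1)).filter
        (fun j => ent (plusApp w a) (j-1) < ent (plusApp w a) j)
      = (insert (w.length+1) (Finset.Icc 2 w.length)).filter
        (fun j => ent (plusApp w a) (j-1) < ent (plusApp w a) j) := by rw [hins]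
  rw [hfe, Finset.filter_insert]
  have hsub : (Finset.Icc 2 w.length).filter
        (fun j => ent (plusApp w a) (j-1) < ent (plusApp w a) j)
      = (Finset.Icc 2 w.length).filter (fun j => ent w (j-1) < ent w j) := by
    apply Finset.filter_congr
    intro j hj
    rw [Finset.mem_Icc] at hj
    rw [ent_plusApp (by omega) (by omega), ent_plusApp (by omega) (by omega)]
    simp [pf_lt_iff]
  have hlast : (ent (plusApp w a) (w.length + 1 - 1) < ent (plusApp w a) (w.length + 1))
      ↔ ent w w.length < a := by
    have hs : w.length + 1 - 1 = w.length := by omega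
    rw [hs, ent_plusApp_last, ent_plusApp h (le_refl _)]
    unfold pf
    split <;> omega
  have hnm : (w.length + 1) ∉ (Finset.Icc 2 w.length).filter
      (fun j => ent w (j-1) < ent w j) := by
    simp [Finset.mem_Icc]
  by_cases hcase : ent w w.length < a
  · rw [if_pos (hlast.mpr hcase), hsub, Finset.card_insert_of_notMem hnm, if_pos hcase]
    omega
  · rw [if_neg (fun hx => hcase (hlast.mp hx)), hsub, if_neg hcase]
    omega

end Aux2
section Part1

lemma isDrSub_nil : IsDrSub [] := by
  intro i hi; simp at hi

lemma part1 (w : List ℕ) (a : ℕ) (ha1 : 1 ≤ a) (ha2 : a ≤ w.length + 1) :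
    IsDrSub (plusApp w a) ↔ (IsDrSub w ∧ a ≤ 1 + wdes w) := by
  rcases Nat.eq_zero_or_pos w.length with hn | hn
  · -- w = []
    have hw : w = [] := List.length_eq_zero_iff.mp hn
    subst hw
    have haeq : a = 1 := by omega
    subst haeq
    simp only [List.length_nil, Nat.zero_add] at *
    constructor
    · intro _; exact ⟨isDrSub_nil, by unfold wdes wDesSet; simp⟩
    · intro _
      intro i hi
      rw [length_plusApp] at hi
      simp at hi
      subst hi
      have h1 : ent (plusApp [] 1) 1 = 1 := ent_plusApp_last [] 1
      rw [length_plusApp, h1]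
      unfold drIdx
      simp
  · -- main case
    have hlen : (plusApp w a).length = w.length + 1 := length_plusApp w a
    have hS : drIdx w w.length + wdes w = w.length := drIdx_add_wdes w hn
    constructor
    · intro h
      have hA : a + (drIdx w w.length + (if ent w w.length < a then 1 else 0)) ≤ w.length + 2 := by
        have := h (w.length+1) (by rw [hlen, Finset.mem_Icc]; omega)
        rw [hlen, ent_plusApp_last, drIdx_plusApp_last hn] at this
        omega
      have hw : IsDrSub w := by
        intro i hi
        rw [Finset.mem_Icc] at hi
        have hcond := h i (by rw [hlen, Finset.mem_Icc]; omega)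
        rw [hlen, ent_plusApp hi.1 hi.2, drIdx_plusApp hi.2] at hcond
        have hmono := drIdx_mono w hi.2
        by_cases hc : a ≤ ent w i
        · unfold pf at hcond; rw [if_pos hc] at hcond; omega
        · unfold pf at hcond; rw [if_neg hc] at hcond
          by_contra hx
          split at hA <;> omega
      refine ⟨hw, ?_⟩
      by_cases hc : ent w w.length < a
      · rw [if_pos hc] at hA; omega
      · rw [if_neg hc] at hA
        have hcond := h w.length (by rw [hlen, Finset.mem_Icc]; omega)
        rw [hlen, ent_plusApp hn (le_refl _), drIdx_plusApp (le_refl _)] at hcond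
        have hc2 : a ≤ ent w w.length := by omega
        unfold pf at hcond; rw [if_pos hc2] at hcond
        omega
    · rintro ⟨hw, ha⟩
      intro i hi
      rw [hlen] at hi ⊢
      rw [Finset.mem_Icc] at hi
      by_cases hc : i ≤ w.length
      · rw [ent_plusApp hi.1 hc, drIdx_plusApp hc]
        have := hw i (by rw [Finset.mem_Icc]; exact ⟨hi.1, hc⟩)
        unfold pf; split <;> omega
      · have hieq : i = w.length + 1 := by omega
        subst hieq
        rw [ent_plusApp_last, drIdx_plusApp_last hn]
        split <;> omega

end Part1
section Aux4

lemma wdes_bound (w : List ℕ) : wdes w + 1 ≤ w.length + 1 := by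
  unfold wdes wDesSet
  have h1 : ((Finset.Icc 2 w.length).filter fun i => ent w i ≤ ent w (i-1)).card
      ≤ (Finset.Icc 2 w.length).card := Finset.card_filter_le _ _
  have h2 : (Finset.Icc 2 w.length).card = w.length - 1 := by rw [Nat.card_Icc]; omega
  omega

lemma wdes_append_last (w : List ℕ) (a : ℕ) (h : 1 ≤ w.length) :
    wdes (w ++ [a]) = wdes w + (if a ≤ ent w w.length then 1 else 0) := by
  unfold wdes wDesSet
  have hins : Finset.Icc 2 (w.length + 1) = insert (w.length + 1) (Finset.Icc 2 w.length) := by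
    ext x; simp [Finset.mem_Icc]; omega
  have hlen : (w ++ [a]).length = w.length + 1 := by simp
  rw [hlen, hins, Finset.filter_insert]
  have hsub : (Finset.Icc 2 w.length).filter (fun i => ent (w++[a]) i ≤ ent (w++[a]) (i-1))
      = (Finset.Icc 2 w.length).filter (fun i => ent w i ≤ ent w (i-1)) := by
    apply Finset.filter_congr
    intro j hj
    rw [Finset.mem_Icc] at hj
    rw [ent_append (by omega) (by omega), ent_append (by omega) (by omega)]
  have hlast : (ent (w++[a]) (w.length+1) ≤ ent (w++[a]) (w.length+1-1))
      ↔ a ≤ ent w w.length := by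
    have hs : w.length + 1 - 1 = w.length := by omega
    rw [hs, ent_append_last, ent_append h (le_refl _)]
  have hnm : (w.length + 1) ∉ (Finset.Icc 2 w.length).filter
      (fun i => ent w i ≤ ent w (i-1)) := by simp [Finset.mem_Icc]
  by_cases hc : a ≤ ent w w.length
  · rw [if_pos (hlast.mpr hc), hsub, Finset.card_insert_of_notMem hnm, if_pos hc]
  · rw [if_neg (fun hx => hc (hlast.mp hx)), hsub, if_neg hc]; omega

lemma wdes_singleton (a : ℕ) : wdes [a] = 0 := by
  unfold wdes wDesSet
  simp

lemma wdes_plusApp (w : List ℕ) (a : ℕ) (h : 1 ≤ w.length) :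
    wdes (plusApp w a) = wdes w + (if a ≤ ent w w.length then 1 else 0) := by
  unfold plusApp
  have hlp : (plus w a).length = w.length := length_plus w a
  have h' : 1 ≤ (plus w a).length := by omega
  rw [wdes_append_last _ _ h']
  have h1 : wdes (plus w a) = wdes w := by
    unfold wdes wDesSet
    rw [hlp]
    apply congrArg Finset.card
    apply Finset.filter_congr
    intro j hj
    rw [Finset.mem_Icc] at hj
    rw [ent_plus (by omega) (by omega), ent_plus (by omega) (by omega)]
    simp [pf_le_iff]
  have h2 : ent (plus w a) (plus w a).length = pf a (ent w w.length) := by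
    rw [hlp, ent_plus h (le_refl _)]
  rw [h1, hlp, ent_plus h (le_refl _)]
  have : (a ≤ pf a (ent w w.length)) ↔ a ≤ ent w w.length := pf_self_le_iff
  by_cases hc : a ≤ ent w w.length
  · rw [if_pos (this.mpr hc), if_pos hc]
  · rw [if_neg (fun hx => hc (this.mp hx)), if_neg hc]

lemma invSeq_nil : IsInvSeq [] := by intro i hi; simp at hi

lemma invSeq_append {w : List ℕ} {a : ℕ} :
    IsInvSeq (w ++ [a]) ↔ IsInvSeq w ∧ 1 ≤ a ∧ a ≤ w.length + 1 := by
  have hlen : (w ++ [a]).length = w.length + 1 := by simp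
  constructor
  · intro h
    refine ⟨?_, ?_, ?_⟩
    · intro i hi
      rw [Finset.mem_Icc] at hi
      have := h i (by rw [hlen, Finset.mem_Icc]; omega)
      rwa [ent_append hi.1 hi.2] at this
    · have := h (w.length+1) (by rw [hlen, Finset.mem_Icc]; omega)
      rw [ent_append_last] at this; exact this.1
    · have := h (w.length+1) (by rw [hlen, Finset.mem_Icc]; omega)
      rw [ent_append_last] at this; omega
  · rintro ⟨hw, ha1, ha2⟩
    intro i hi
    rw [hlen, Finset.mem_Icc] at hi
    by_cases hc : i ≤ w.length
    · rw [ent_append hi.1 hc]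
      exact hw i (by rw [Finset.mem_Icc]; exact ⟨hi.1, hc⟩)
    · have : i = w.length + 1 := by omega
      subst this
      rw [ent_append_last]
      exact ⟨ha1, ha2⟩

lemma wDesSeq_nil : IsWDesSeq [] := by
  constructor
  · exact invSeq_nil
  · intro i hi; simp at hi

lemma wDesSeq_append {w : List ℕ} {a : ℕ} :
    IsWDesSeq (w ++ [a]) ↔ IsWDesSeq w ∧ 1 ≤ a ∧ a ≤ 1 + wdes w := by
  have hlen : (w ++ [a]).length = w.length + 1 := by simp
  have htake : ∀ k, k ≤ w.length → (w ++ [a]).take k = w.take k := by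
    intro k hk
    rw [List.take_append_of_le_length hk]
  constructor
  · rintro ⟨hinv, hcond⟩
    obtain ⟨hw, ha1, ha2⟩ := invSeq_append.mp hinv
    refine ⟨⟨hw, ?_⟩, ha1, ?_⟩
    · intro i hi
      rw [Finset.mem_Icc] at hi
      have := hcond i (by rw [hlen, Finset.mem_Icc]; omega)
      rwa [ent_append hi.1 hi.2, htake (i-1) (by omega)] at this
    · have := hcond (w.length+1) (by rw [hlen, Finset.mem_Icc]; omega)
      rw [ent_append_last] at this
      have hs : w.length + 1 - 1 = w.length := by omega
      rw [hs, htake w.length (le_refl _), List.take_length] at this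
      exact this
  · rintro ⟨⟨hw, hcond⟩, ha1, ha2⟩
    have ha2' : a ≤ w.length + 1 := by
      have := wdes_bound w; omega
    refine ⟨invSeq_append.mpr ⟨hw, ha1, ha2'⟩, ?_⟩
    intro i hi
    rw [hlen, Finset.mem_Icc] at hi
    by_cases hc : i ≤ w.length
    · rw [ent_append hi.1 hc, htake (i-1) (by omega)]
      exact hcond i (by rw [Finset.mem_Icc]; exact ⟨hi.1, hc⟩)
    · have : i = w.length + 1 := by omega
      subst this
      rw [ent_append_last]
      have hs : w.length + 1 - 1 = w.length := by omega
      rw [hs, htake w.length (le_refl _), List.take_length]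
      omega

end Aux4
section Aux5

lemma Mstep_append {w : List ℕ} (v : List ℕ) {j : ℕ} (h1 : 1 ≤ j) (h2 : j ≤ w.length) :
    Mstep (w ++ v) j = Mstep w j ++ v := by
  apply List.ext_getElem
  · simp [length_Mstep, length_Mstep]
  · intro k hk1 hk2
    rw [length_Mstep, List.length_append] at hk1
    have hent : ent (w ++ v) j = ent w j := ent_append h1 h2
    by_cases hc : k < w.length
    · have hgl : (Mstep w j ++ v)[k] = (Mstep w j)[k]'(by rw [length_Mstep]; exact hc) :=
        List.getElem_append_left (by rw [length_Mstep]; exact hc)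
      rw [hgl]
      show (List.mapIdx _ (w ++ v))[k]'(by simp only [List.length_mapIdx, List.length_append]; omega) = (List.mapIdx _ w)[k]'(by simp only [List.length_mapIdx]; omega)
      rw [List.getElem_mapIdx, List.getElem_mapIdx]
      have hwk : (w ++ v)[k]'(by simp; omega) = w[k]'hc := List.getElem_append_left hc
      simp only [hent, hwk]
    · have hge : w.length ≤ k := by omega
      have hgl : (Mstep w j ++ v)[k]'hk2 = v[k - w.length]'(by
          simp only [length_Mstep, List.length_append] at hk2 ⊢; omega) := by
        have h0 := List.getElem_append_right (as := Mstep w j) (bs := v) (i := k)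
          (by rw [length_Mstep]; exact hge) (h₂ := hk2)
        simp only [length_Mstep] at h0
        exact h0
      rw [hgl]
      show (List.mapIdx _ (w ++ v))[k]'(by simp only [List.length_mapIdx, List.length_append]; omega) = _
      rw [List.getElem_mapIdx]
      have hjk : ¬ (k + 1 < j ∧ ent (w++v) j ≤ (w++v)[k]'(by simp; omega)) := by
        rintro ⟨hk, -⟩; omega
      rw [if_neg hjk]
      exact List.getElem_append_right hge

lemma foldl_Mstep_length (l : List ℕ) (w : List ℕ) :
    (l.foldl Mstep w).length = w.length := by
  induction l generalizing w with
  | nil => rfl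
  | cons j t ih => simp [List.foldl_cons, ih, length_Mstep]

lemma foldl_Mstep_append {v : List ℕ} : ∀ (l : List ℕ) (w : List ℕ),
    (∀ j ∈ l, 1 ≤ j ∧ j ≤ w.length) →
    (l.foldl Mstep (w ++ v)) = (l.foldl Mstep w) ++ v := by
  intro l
  induction l with
  | nil => intro w _; rfl
  | cons j t ih =>
    intro w hj
    have h1 := hj j (by simp)
    rw [List.foldl_cons, List.foldl_cons, Mstep_append v h1.1 h1.2]
    apply ih
    intro x hx
    have := hj x (by simp [hx])
    rw [length_Mstep]
    exact this

lemma sort_Icc_one (m : ℕ) : (Finset.Icc 1 m).sort (· ≤ ·) = List.range' 1 m := by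
  apply (fun hp h1 h2 => List.Perm.eq_of_pairwise' (r := ((· ≤ ·) : ℕ → ℕ → Prop)) h1 h2 hp)
  · apply (List.perm_ext_iff_of_nodup (Finset.sort_nodup _ _) (List.nodup_range' (s := 1) (n := m) 1)).mpr
    intro x
    rw [Finset.mem_sort, Finset.mem_Icc, List.mem_range']
    constructor
    · rintro ⟨h1, h2⟩; exact ⟨x - 1, by omega, by omega⟩
    · rintro ⟨i, hi, rfl⟩; omega
  · exact Finset.pairwise_sort _ _
  · have := List.pairwise_lt_range' (s := 1) (n := m) 1
    exact List.Pairwise.imp le_of_lt this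

lemma ascSet_invSeq {v : List ℕ} {d : ℕ} (h : IsInvSeq v) (hd : v.length ≤ d + 1) :
    ascSet d v = Finset.Icc 1 v.length := by
  unfold ascSet
  apply Finset.filter_true_of_mem
  intro i hi
  rw [Finset.mem_Icc] at hi
  by_cases h1 : i = 1
  · left; exact h1
  · right
    have hi1 : 1 ≤ i - 1 := by omega
    have hi2 : i - 1 ≤ v.length := by omega
    have hb := (h (i-1) (by rw [Finset.mem_Icc]; exact ⟨hi1, hi2⟩)).2
    have hb2 := (h i (by rw [Finset.mem_Icc]; exact hi)).1
    omega

lemma hatmax_invSeq {v : List ℕ} (h : IsInvSeq v) :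
    hatmax v = (List.range' 1 v.length).foldl Mstep v := by
  unfold hatmax hatd
  rw [ascSet_invSeq h (by omega), sort_Icc_one]

lemma hatmax_nil : hatmax [] = [] := by
  rw [hatmax_invSeq invSeq_nil]; rfl

lemma length_hatmax {v : List ℕ} (h : IsInvSeq v) : (hatmax v).length = v.length := by
  rw [hatmax_invSeq h, foldl_Mstep_length]

lemma Mstep_last (u : List ℕ) (a : ℕ) :
    Mstep (u ++ [a]) (u.length + 1) = plusApp u a := by
  have hent : ent (u ++ [a]) (u.length + 1) = a := ent_append_last u a
  apply List.ext_getElem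
  · rw [length_Mstep, length_plusApp]; simp
  · intro k hk1 hk2
    rw [length_Mstep, List.length_append] at hk1
    simp at hk1
    show (List.mapIdx _ (u ++ [a]))[k]'(by simp only [List.length_mapIdx, List.length_append, List.length_singleton]; omega) = _
    rw [List.getElem_mapIdx]
    by_cases hc : k < u.length
    · have hgl : (u ++ [a])[k]'(by simp; omega) = u[k]'hc := List.getElem_append_left hc
      have hgr : (plusApp u a)[k]'hk2 = pf a (u[k]'hc) := by
        have h1 : (plusApp u a)[k]'hk2 = (plus u a)[k]'(by rw [length_plus]; exact hc) :=
          List.getElem_append_left (by rw [length_plus]; exact hc)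
        rw [h1]
        simp only [plus_eq_map, List.getElem_map]
      rw [hgr]
      simp only [hent, hgl]
      unfold pf
      by_cases hle : a ≤ u[k]'hc
      · rw [if_pos ⟨by omega, hle⟩, if_pos hle]
      · rw [if_neg (by tauto), if_neg hle]
    · have hke : k = u.length := by omega
      subst hke
      have hgl : (u ++ [a])[u.length]'(by simp) = a := by
        rw [List.getElem_append_right (le_refl _)]
        simp
      have hgr : (plusApp u a)[u.length]'hk2 = a := by
        unfold plusApp
        show (plus u a ++ [a])[u.length]'(by simp [length_plus]) = a
        rw [List.getElem_append_right (by rw [length_plus])]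
        simp [length_plus]
      rw [hgr]
      simp only [hent, hgl]
      rw [if_neg (by omega)]

lemma hatmax_append {w : List ℕ} {a : ℕ} (hw : IsInvSeq w) (ha1 : 1 ≤ a)
    (ha2 : a ≤ w.length + 1) :
    hatmax (w ++ [a]) = plusApp (hatmax w) a := by
  have hwa : IsInvSeq (w ++ [a]) := invSeq_append.mpr ⟨hw, ha1, ha2⟩
  rw [hatmax_invSeq hwa, hatmax_invSeq hw]
  have hlen : (w ++ [a]).length = w.length + 1 := by simp
  rw [hlen, List.range'_concat, List.foldl_append]
  rw [foldl_Mstep_append _ _ (fun j hj => by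
    rw [List.mem_range'] at hj; obtain ⟨i, hi, rfl⟩ := hj; omega)]
  simp only [List.foldl_cons, List.foldl_nil]
  have hul : ((List.range' 1 w.length).foldl Mstep w).length = w.length :=
    foldl_Mstep_length _ _
  have hm := Mstep_last ((List.range' 1 w.length).foldl Mstep w) a
  rw [hul] at hm
  rw [show 1 + 1 * w.length = w.length + 1 by omega, hm]

end Aux5
section Main

lemma permWord_nil : IsPermWord [] := ⟨List.nodup_nil, by simp⟩

lemma permWord_plusApp {w : List ℕ} {a : ℕ} (h : IsPermWord w) (ha1 : 1 ≤ a)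
    (ha2 : a ≤ w.length + 1) : IsPermWord (plusApp w a) := by
  constructor
  · unfold plusApp
    rw [List.nodup_append]
    refine ⟨List.Nodup.map (pf_injective a) h.1, List.nodup_singleton a, ?_⟩
    intro x hx b hx2 hxb
    simp at hx2
    subst hx2
    subst hxb
    rw [plus_eq_map, List.mem_map] at hx
    obtain ⟨y, -, hy⟩ := hx
    unfold pf at hy
    split at hy <;> omega
  · intro y hy
    rw [length_plusApp]
    unfold plusApp at hy
    rw [List.mem_append] at hy
    rcases hy with hy | hy
    · rw [plus_eq_map, List.mem_map] at hy
      obtain ⟨x, hx, rfl⟩ := hy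
      have := h.2 x hx
      unfold pf
      split <;> omega
    · simp at hy
      subst hy
      omega

lemma package : ∀ w : List ℕ, IsInvSeq w →
    ent (hatmax w) w.length = ent w w.length ∧
    wdes (hatmax w) = wdes w ∧
    IsPermWord (hatmax w) ∧
    (IsWDesSeq w ↔ IsDrSub (hatmax w)) := by
  intro w
  induction w using List.reverseRecOn with
  | nil =>
    intro _
    rw [hatmax_nil]
    exact ⟨rfl, rfl, permWord_nil, iff_of_true wDesSeq_nil isDrSub_nil⟩
  | append_singleton u a ih =>
    intro hI
    obtain ⟨hu, ha1, ha2⟩ := invSeq_append.mp hI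
    obtain ⟨ihe, ihw, ihp, ihiff⟩ := ih hu
    have hB : hatmax (u ++ [a]) = plusApp (hatmax u) a := hatmax_append hu ha1 ha2
    have hL : (hatmax u).length = u.length := length_hatmax hu
    have hlen : (u ++ [a]).length = u.length + 1 := by simp
    refine ⟨?_, ?_, ?_, ?_⟩
    · rw [hB, hlen, ent_append_last]
      rw [← hL, ent_plusApp_last]
    · rw [hB]
      rcases Nat.eq_zero_or_pos u.length with h0 | hpos
      · have hun : u = [] := List.length_eq_zero_iff.mp h0
        subst hun
        rw [hatmax_nil]
        show wdes [a] = wdes [a]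
        rfl
      · rw [wdes_plusApp _ _ (by omega : 1 ≤ (hatmax u).length)]
        rw [hL, ihe, ihw, wdes_append_last u a hpos]
    · rw [hB]
      exact permWord_plusApp ihp ha1 (by omega)
    · rw [hB, wDesSeq_append, part1 (hatmax u) a ha1 (by omega)]
      rw [ihw]
      constructor
      · rintro ⟨h1, -, h3⟩; exact ⟨ihiff.mp h1, h3⟩
      · rintro ⟨h1, h3⟩; exact ⟨ihiff.mpr h1, ha1, h3⟩

lemma inj_aux : ∀ w1 : List ℕ, IsWDesSeq w1 → ∀ w2 : List ℕ, IsWDesSeq w2 →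
    hatmax w1 = hatmax w2 → w1 = w2 := by
  intro w1
  induction w1 using List.reverseRecOn with
  | nil =>
    intro _ w2 h2 heq
    rw [hatmax_nil] at heq
    have : (hatmax w2).length = w2.length := length_hatmax h2.1
    rw [← heq] at this
    simp at this
    exact (List.length_eq_zero_iff.mp this.symm).symm
  | append_singleton u a ih =>
    intro h1 w2 h2 heq
    obtain ⟨hu, ha1, ha2⟩ := wDesSeq_append.mp h1
    rcases List.eq_nil_or_concat' w2 with rfl | ⟨v, b, rfl⟩
    · rw [hatmax_nil] at heq
      have : (hatmax (u ++ [a])).length = (u ++ [a]).length := length_hatmax h1.1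
      rw [heq] at this
      simp at this
    · obtain ⟨hv, hb1, hb2⟩ := wDesSeq_append.mp h2
      have ha2' : a ≤ u.length + 1 := by have := wdes_bound u; omega
      have hb2' : b ≤ v.length + 1 := by have := wdes_bound v; omega
      rw [hatmax_append hu.1 ha1 ha2', hatmax_append hv.1 hb1 hb2'] at heq
      have hLu : (hatmax u).length = u.length := length_hatmax hu.1
      have hLv : (hatmax v).length = v.length := length_hatmax hv.1
      have hlen : u.length = v.length := by
        have := congrArg List.length heq
        rw [length_plusApp, length_plusApp, hLu, hLv] at this
        omega
      have hab : a = b := by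
        have := congrArg (fun l => ent l (u.length + 1)) heq
        rw [← hLu, ent_plusApp_last, hLu, hlen, ← hLv, ent_plusApp_last] at this
        exact this
      subst hab
      have hplus : plus (hatmax u) a = plus (hatmax v) a := by
        unfold plusApp at heq
        exact List.append_cancel_right heq
      have hhat : hatmax u = hatmax v := by
        rw [plus_eq_map, plus_eq_map] at hplus
        exact List.map_injective_iff.mpr (pf_injective a) hplus
      rw [ih hu v hv hhat]

lemma surj_aux : ∀ n : ℕ, ∀ p : List ℕ, IsPermWord p → p.length = n → IsDrSub p →
    ∃ w, IsWDesSeq w ∧ w.length = n ∧ hatmax w = p := by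
  intro n
  induction n with
  | zero =>
    intro p _ hlen _
    have : p = [] := List.length_eq_zero_iff.mp hlen
    subst this
    exact ⟨[], wDesSeq_nil, rfl, hatmax_nil⟩
  | succ n ihn =>
    intro p hperm hlen hdr
    rcases List.eq_nil_or_concat' p with rfl | ⟨q, a, rfl⟩
    · simp at hlen
    · have hqlen : q.length = n := by simp at hlen; omega
      have hnodup := hperm.1
      rw [List.nodup_append] at hnodup
      obtain ⟨hqn, -, hdisj⟩ := hnodup
      have ha_notin : a ∉ q := fun h => hdisj a h a (by simp) rfl
      have habound := hperm.2 a (by simp)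
      rw [hlen] at habound
      obtain ⟨ha1, ha2⟩ := habound
      set q' := q.map (fun x => if a < x then x - 1 else x) with hq'
      have hq'len : q'.length = n := by rw [hq', List.length_map, hqlen]
      have h_plus : plus q' a = q := by
        rw [hq', plus_eq_map, List.map_map]
        have : ∀ x ∈ q, (pf a ∘ fun x => if a < x then x - 1 else x) x = x := by
          intro x hx
          have hxa : x ≠ a := fun h => ha_notin (h ▸ hx)
          simp only [Function.comp, pf]
          split <;> split <;> omega
        rw [List.map_congr_left this]
        exact List.map_id q
      have hq'perm : IsPermWord q' := by
        constructor
        · rw [hq']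
          apply List.Nodup.map_on _ hqn
          intro x hx y hy hxy
          have hxa : x ≠ a := fun h => ha_notin (h ▸ hx)
          have hya : y ≠ a := fun h => ha_notin (h ▸ hy)
          split at hxy <;> split at hxy <;> omega
        · intro y hy
          rw [hq', List.mem_map] at hy
          obtain ⟨x, hx, rfl⟩ := hy
          have hxb := hperm.2 x (by simp [hx])
          rw [hlen] at hxb
          have hxa : x ≠ a := fun h => ha_notin (h ▸ hx)
          rw [hq'len]
          split <;> omega
      have hpApp : plusApp q' a = q ++ [a] := by
        unfold plusApp; rw [h_plus]
      have hdr' := (part1 q' a ha1 (by omega)).mp (by rw [hpApp]; exact hdr)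
      obtain ⟨u, hu, hulen, hueq⟩ := ihn q' hq'perm hq'len hdr'.1
      have hwdes : wdes (hatmax u) = wdes u := (package u hu.1).2.1
      have ha_wdes : a ≤ 1 + wdes u := by
        rw [← hwdes, hueq]; exact hdr'.2
      refine ⟨u ++ [a], wDesSeq_append.mpr ⟨hu, ha1, ha_wdes⟩, by simp [hulen], ?_⟩
      rw [hatmax_append hu.1 ha1 (by omega), hueq, hpApp]

end Main

/-- for a permutation `π` of `{1,…,n}` and `a ∈ {1,…,n+1}`, the
permutation `π⁺a` is dr-subdiagonal iff `π` is dr-subdiagonal and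
`a ≤ 1 + wdes(π)`; furthermore an inversion sequence `α` is a weak descent
sequence iff `hat_max(α)` is dr-subdiagonal, and `hat_max` restricts to a
bijection from weak descent sequences of length `n` to dr-subdiagonal
permutations of `{1,…,n}`. -/
theorem stmt16 :
    (∀ w : List ℕ, IsPermWord w → ∀ a : ℕ, 1 ≤ a → a ≤ w.length + 1 →
      (IsDrSub (plusApp w a) ↔ (IsDrSub w ∧ a ≤ 1 + wdes w))) ∧
    (∀ w : List ℕ, IsInvSeq w → (IsWDesSeq w ↔ IsDrSub (hatmax w))) ∧
    (∀ n : ℕ, Set.BijOn hatmax {w : List ℕ | IsWDesSeq w ∧ w.length = n}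
      {p : List ℕ | IsPermWord p ∧ p.length = n ∧ IsDrSub p}) := by
  refine ⟨fun w _ a ha1 ha2 => part1 w a ha1 ha2, fun w hw => (package w hw).2.2.2, ?_⟩
  intro n
  refine ⟨?_, ?_, ?_⟩
  · rintro w ⟨hwd, hlen⟩
    obtain ⟨-, -, hp, hiff⟩ := package w hwd.1
    exact ⟨hp, by rw [length_hatmax hwd.1]; exact hlen, hiff.mp hwd⟩
  · rintro w1 ⟨h1, -⟩ w2 ⟨h2, -⟩ heq
    exact inj_aux w1 h1 w2 h2 heq
  · rintro p ⟨hp1, hp2, hp3⟩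
    obtain ⟨w, hw, hwlen, hweq⟩ := surj_aux n p hp1 hp2 hp3
    exact ⟨w, ⟨hw, hwlen⟩, hweq⟩
end
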